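/- arXiv:math/9812111 — 2 statements merged into one kernel-verified Lean document; each statement's English description precedes it below -/
import Mathlib

section
/- Let P, Q and Q_1 be polynomials in one complex variable. Suppose P has no zeros in the open right half-plane A = {z ∈ ℂ : Re z > 0} and that Q(w) + P(w)·v·Q_1(w) ≠ 0 for all v, w ∈ A. Then the polynomial S(z) = Q(z) + P(z)Q_1'(z) either has no zeros in A or is identically zero. -/
open Polynomial

/-- A ball of positive radius in ℂ is infinite. -/
lemma aux_ball_infinite (z₀ : ℂ) {r : ℝ} (hr : 0 < r) : (Metric.ball z₀ r).Infinite := by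
  apply Set.infinite_of_injective_forall_mem
    (f := fun n : ℕ => z₀ + ((r / (n + 2) : ℝ) : ℂ))
  · intro m n hmn
    simp only [add_right_inj, Complex.ofReal_inj] at hmn
    have hm : ((m:ℝ) + 2) ≠ 0 := by positivity
    have hn : ((n:ℝ) + 2) ≠ 0 := by positivity
    rw [div_eq_div_iff hm hn] at hmn
    have h2 : ((m:ℝ)) = n := by
      have := mul_left_cancel₀ hr.ne' (by linarith [hmn] : r * ((n:ℝ)+2) = r * ((m:ℝ)+2))
      linarith
    exact_mod_cast h2
  · intro n
    have hn : (1:ℝ) < n + 2 := by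
      have : (0:ℝ) ≤ (n:ℝ) := Nat.cast_nonneg n
      linarith
    have h1 : r / (n + 2) < r := div_lt_self hr hn
    have h2 : 0 < r / ((n:ℝ) + 2) := by positivity
    simp only [Metric.mem_ball, dist_eq_norm, add_sub_cancel_left, Complex.norm_real,
      Real.norm_eq_abs]
    rw [abs_of_pos h2]
    exact h1

/-- Max-modulus based lemma: a holomorphic function with nonnegative real part on a
preconnected open set that vanishes somewhere vanishes identically. -/
lemma aux_max {U : Set ℂ} (hU : IsOpen U) (hc : IsPreconnected U) {f : ℂ → ℂ}
    (hf : DifferentiableOn ℂ f U) (hre : ∀ w ∈ U, 0 ≤ (f w).re)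
    {z₀ : ℂ} (hz₀ : z₀ ∈ U) (h0 : f z₀ = 0) : ∀ w ∈ U, f w = 0 := by
  have hne : ∀ w ∈ U, f w + 1 ≠ 0 := by
    intro w hw hcon
    have h1 : (f w).re = -1 := by
      have := congrArg Complex.re hcon
      simp at this
      linarith
    linarith [hre w hw]
  set g : ℂ → ℂ := fun w => (f w + 1)⁻¹ with hg
  have hgd : DifferentiableOn ℂ g U := ((hf.add_const 1).inv hne)
  have hnorm : ∀ w ∈ U, ‖g w‖ ≤ 1 := by
    intro w hw
    have h1 : (1:ℝ) ≤ ‖f w + 1‖ := by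
      have : (1:ℝ) ≤ (f w + 1).re := by
        simp only [Complex.add_re, Complex.one_re]
        linarith [hre w hw]
      calc (1:ℝ) ≤ (f w + 1).re := this
        _ ≤ |(f w + 1).re| := le_abs_self _
        _ ≤ ‖f w + 1‖ := Complex.abs_re_le_norm _
    rw [hg]
    simp only [norm_inv]
    rw [inv_le_one_iff₀]
    right; exact h1
  have hgz₀ : g z₀ = 1 := by simp [hg, h0]
  have hmax : IsMaxOn (norm ∘ g) U z₀ := by
    intro w hw
    simp only [Function.comp_apply, hgz₀, norm_one, Set.mem_setOf_eq]
    exact hnorm w hw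
  have heq := Complex.eqOn_of_isPreconnected_of_isMaxOn_norm hc hU hgd hz₀ hmax
  intro w hw
  have h2 : g w = 1 := by
    have := heq hw
    simpa [Function.const, hgz₀] using this
  have h3 : f w + 1 = 1 := by
    rw [hg] at h2
    simpa [inv_eq_one] using h2
  linear_combination h3

/-- The logarithmic derivative of a polynomial whose roots all lie in the closed left
half-plane has nonnegative real part on the open right half-plane. -/
lemma aux_logderiv : ∀ (n : ℕ) (p : Polynomial ℂ), p.natDegree = n → p ≠ 0 →
    (∀ z : ℂ, p.eval z = 0 → z.re ≤ 0) → ∀ w : ℂ, 0 < w.re →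
    0 ≤ ((Polynomial.derivative p).eval w / p.eval w).re := by
  intro n
  induction n with
  | zero =>
    intro p hdeg _ _ w _
    obtain ⟨a, ha⟩ := Polynomial.natDegree_eq_zero.mp hdeg
    subst ha
    simp
  | succ n ih =>
    intro p hdeg hp hroots w hw
    have hdegpos : 0 < p.degree := by
      rw [Polynomial.degree_eq_natDegree hp, hdeg]
      exact_mod_cast Nat.succ_pos n
    obtain ⟨z, hz⟩ := Complex.exists_root hdegpos
    obtain ⟨q, hq⟩ := Polynomial.dvd_iff_isRoot.mpr hz
    have hXz : (Polynomial.X - Polynomial.C z) ≠ 0 := Polynomial.X_sub_C_ne_zero z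
    have hqne : q ≠ 0 := by
      intro h0; rw [h0, mul_zero] at hq; exact hp hq
    have hqdeg : q.natDegree = n := by
      have := Polynomial.natDegree_mul hXz hqne
      rw [← hq, hdeg, Polynomial.natDegree_X_sub_C] at this
      omega
    have hqroots : ∀ y : ℂ, q.eval y = 0 → y.re ≤ 0 := by
      intro y hy
      apply hroots
      rw [hq]; simp [hy]
    have hqw : q.eval w ≠ 0 := by
      intro h0
      exact absurd (hqroots w h0) (not_le.mpr hw)
    have hwz : w - z ≠ 0 := by
      intro h0
      have : w = z := by linear_combination h0
      subst this
      exact absurd (hroots w hz) (not_le.mpr hw)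
    have hpz : p.eval w = (w - z) * q.eval w := by rw [hq]; simp
    have hpd : (Polynomial.derivative p).eval w = q.eval w
        + (w - z) * (Polynomial.derivative q).eval w := by
      rw [hq]
      simp only [Polynomial.derivative_mul, Polynomial.eval_add, Polynomial.eval_mul,
        Polynomial.eval_sub, Polynomial.eval_X, Polynomial.eval_C, Polynomial.derivative_sub,
        Polynomial.derivative_X, Polynomial.derivative_C, Polynomial.eval_one, sub_zero, one_mul]
    have key : (Polynomial.derivative p).eval w / p.eval w
        = (w - z)⁻¹ + (Polynomial.derivative q).eval w / q.eval w := by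
      rw [hpz, hpd]
      field_simp
    rw [key, Complex.add_re]
    have h1 : 0 ≤ ((w - z)⁻¹).re := by
      rw [Complex.inv_re]
      apply div_nonneg _ (Complex.normSq_nonneg _)
      simp only [Complex.sub_re]
      have := hroots z hz
      linarith
    have h2 := ih q hqdeg hqne hqroots w hw
    linarith

theorem stmt_14 (P Q Q₁ : Polynomial ℂ)
    (hP : ∀ z : ℂ, 0 < z.re → P.eval z ≠ 0)
    (h : ∀ v w : ℂ, 0 < v.re → 0 < w.re → Q.eval w + P.eval w * v * Q₁.eval w ≠ 0) :
    (∀ z : ℂ, 0 < z.re → (Q + P * Polynomial.derivative Q₁).eval z ≠ 0) ∨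
    Q + P * Polynomial.derivative Q₁ = 0 := by
  -- the key pointwise consequence of h:
  have hkey : ∀ w : ℂ, 0 < w.re → P.eval w * Q₁.eval w ≠ 0 →
      0 ≤ (Q.eval w / (P.eval w * Q₁.eval w)).re := by
    intro w hw hb
    by_contra hlt
    push_neg at hlt
    set v : ℂ := -(Q.eval w / (P.eval w * Q₁.eval w)) with hv
    have hvre : 0 < v.re := by
      rw [hv, Complex.neg_re]; linarith
    apply h v w hvre hw
    rw [hv]
    rw [show Q.eval w + P.eval w * -(Q.eval w / (P.eval w * Q₁.eval w)) * Q₁.eval w = Q.eval w - Q.eval w / (P.eval w * Q₁.eval w) * (P.eval w * Q₁.eval w) by ring, div_mul_cancel₀ _ hb, sub_self]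
  by_cases hQ₁0 : Q₁ = 0
  · left
    intro z hz
    have := h 1 z (by norm_num) hz
    simpa [hQ₁0] using this
  -- Q₁ has no zeros in the right half-plane
  have hQ1A : ∀ z : ℂ, 0 < z.re → Q₁.eval z ≠ 0 := by
    intro z₀ hz₀ hzero
    have hQz : Q.eval z₀ ≠ 0 := by
      have := h 1 z₀ (by norm_num) hz₀
      simpa [hzero] using this
    have hopen : IsOpen {z : ℂ | 0 < z.re ∧ Q.eval z ≠ 0} := by
      apply IsOpen.inter
      · exact isOpen_lt continuous_const Complex.continuous_re
      · exact isOpen_ne_fun Q.continuous continuous_const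
    obtain ⟨r, hr, hball⟩ := Metric.isOpen_iff.mp hopen z₀ ⟨hz₀, hQz⟩
    set f : ℂ → ℂ := fun w => P.eval w * Q₁.eval w / Q.eval w with hf
    have hdiff : DifferentiableOn ℂ f (Metric.ball z₀ r) := by
      apply DifferentiableOn.div
      · exact ((P.differentiable.mul Q₁.differentiable)).differentiableOn
      · exact Q.differentiable.differentiableOn
      · intro w hw; exact (hball hw).2
    have hre : ∀ w ∈ Metric.ball z₀ r, 0 ≤ (f w).re := by
      intro w hw
      obtain ⟨hwre, hQw⟩ := hball hw
      by_cases hb : P.eval w * Q₁.eval w = 0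
      · simp [hf, hb]
      · have h1 := hkey w hwre hb
        have h2 : f w = (Q.eval w / (P.eval w * Q₁.eval w))⁻¹ := by
          rw [hf, inv_div]
        rw [h2, Complex.inv_re]
        exact div_nonneg h1 (Complex.normSq_nonneg _)
    have hzf : f z₀ = 0 := by simp [hf, hzero]
    have hall := aux_max Metric.isOpen_ball (convex_ball z₀ r).isPreconnected hdiff hre
      (Metric.mem_ball_self hr) hzf
    have hPQ : P * Q₁ = 0 := by
      apply Polynomial.eq_zero_of_infinite_isRoot
      apply Set.Infinite.mono _ (aux_ball_infinite z₀ hr)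
      intro w hw
      have hfw := hall w hw
      have hQw := (hball hw).2
      have : P.eval w * Q₁.eval w = 0 := by
        rw [hf] at hfw
        exact (div_eq_zero_iff.mp hfw).resolve_right hQw
      simpa [Polynomial.IsRoot]
    rcases mul_eq_zero.mp hPQ with hc | hc
    · exact hP 1 (by norm_num) (by rw [hc]; simp)
    · exact hQ₁0 hc
  -- roots of Q₁ lie in the closed left half-plane
  have hroots : ∀ z : ℂ, Q₁.eval z = 0 → z.re ≤ 0 := by
    intro z hz
    by_contra hlt
    push_neg at hlt
    exact hQ1A z hlt hz
  by_cases hS : ∃ w₀ : ℂ, 0 < w₀.re ∧ (Q + P * Polynomial.derivative Q₁).eval w₀ = 0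
  · right
    obtain ⟨w₀, hw₀, hSw₀⟩ := hS
    set U : Set ℂ := {z : ℂ | 0 < z.re} with hU
    have hUopen : IsOpen U := isOpen_lt continuous_const Complex.continuous_re
    have hUconn : IsPreconnected U := (convex_halfSpace_re_gt 0).isPreconnected
    set F : ℂ → ℂ := fun w =>
      (Q + P * Polynomial.derivative Q₁).eval w / (P.eval w * Q₁.eval w) with hF
    have hden : ∀ w ∈ U, P.eval w * Q₁.eval w ≠ 0 := by
      intro w hw
      exact mul_ne_zero (hP w hw) (hQ1A w hw)
    have hdiff : DifferentiableOn ℂ F U := by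
      apply DifferentiableOn.div
      · exact (Q + P * Polynomial.derivative Q₁).differentiable.differentiableOn
      · exact (P.differentiable.mul Q₁.differentiable).differentiableOn
      · exact hden
    have hre : ∀ w ∈ U, 0 ≤ (F w).re := by
      intro w hw
      have hPw := hP w hw
      have hQ1w := hQ1A w hw
      have hsplit : F w = Q.eval w / (P.eval w * Q₁.eval w)
          + (Polynomial.derivative Q₁).eval w / Q₁.eval w := by
        rw [hF]
        simp only [Polynomial.eval_add, Polynomial.eval_mul]
        field_simp
      rw [hsplit, Complex.add_re]
      have h1 := hkey w hw (hden w hw)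
      have h2 := aux_logderiv Q₁.natDegree Q₁ rfl hQ₁0 hroots w hw
      linarith
    have hF0 : F w₀ = 0 := by
      rw [hF]
      simp [hSw₀]
    have hall := aux_max hUopen hUconn hdiff hre hw₀ hF0
    apply Polynomial.eq_zero_of_infinite_isRoot
    apply Set.Infinite.mono (s := U)
    · intro w hw
      have hfw := hall w hw
      rw [hF] at hfw
      have := (div_eq_zero_iff.mp hfw).resolve_right (hden w hw)
      simpa [Polynomial.IsRoot]
    · apply Set.infinite_of_injective_forall_mem
        (f := fun n : ℕ => ((n : ℂ) + 1))
      · intro m n hmn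
        simp only [add_left_inj, Nat.cast_inj] at hmn
        exact hmn
      · intro n
        simp only [hU, Set.mem_setOf_eq, Complex.add_re, Complex.natCast_re, Complex.one_re]
        positivity
  · left
    push_neg at hS
    exact hS
end

section
/- For all m, k ∈ ℕ and all z ∈ ℂ which is not a nonpositive integer (i.e. z ≠ −n for every n ∈ ℕ), one has Γ(z+m+k)/(Γ(z+m)Γ(z+k)) = Σ_{n=0}^{min(m,k)} C(m,n) C(k,n) n!/Γ(z+n), where C(m,n) denotes the binomial coefficient and Γ the complex Gamma function. -/
open Finset

lemma lemA : ∀ (m k : ℕ) (z : ℂ),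
    ∏ i ∈ range m, (z + k + i) =
    ∑ n ∈ range (m + 1), (m.choose n : ℂ) * (k.choose n : ℂ) * (n.factorial : ℂ) *
      ∏ i ∈ range (m - n), (z + n + i) := by
  intro m
  induction m with
  | zero => intro k z; simp
  | succ m ih =>
    intro k z
    rw [prod_range_succ, Finset.sum_range_succ']
    have hsplit : ∀ j ∈ range (m + 1),
        ((m+1).choose (j+1) : ℂ) * (k.choose (j+1) : ℂ) * ((j+1).factorial : ℂ) *
          ∏ i ∈ range (m + 1 - (j+1)), (z + (j+1:ℕ) + i)
        = ((m.choose (j+1) : ℂ) * (k.choose (j+1) : ℂ) * ((j+1).factorial : ℂ) *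
            ∏ i ∈ range (m - j), (z + (j+1:ℕ) + i))
          + ((m.choose j : ℂ) * (k.choose (j+1) : ℂ) * ((j+1).factorial : ℂ) *
            ∏ i ∈ range (m - j), (z + (j+1:ℕ) + i)) := by
      intro j hj
      rw [Nat.choose_succ_succ m j, show m + 1 - (j + 1) = m - j by omega]
      push_cast; ring
    rw [Finset.sum_congr rfl hsplit, Finset.sum_add_distrib]
    set g : ℕ → ℂ := fun n => (m.choose n : ℂ) * (k.choose n : ℂ) * (n.factorial : ℂ) *
      ∏ i ∈ range (m + 1 - n), (z + (n:ℕ) + i) with hg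
    have hA : (∑ j ∈ range (m + 1), (m.choose (j+1) : ℂ) * (k.choose (j+1) : ℂ) *
            ((j+1).factorial : ℂ) * ∏ i ∈ range (m - j), (z + (j+1:ℕ) + i))
        + ((m+1).choose 0 : ℂ) * (k.choose 0 : ℂ) * ((Nat.factorial 0 : ℕ) : ℂ) *
            ∏ i ∈ range (m + 1 - 0), (z + (0:ℕ) + i)
        = (∏ i ∈ range m, (z + k + i)) * (z + m) := by
      have h1 : ∀ j ∈ range (m + 1),
          (m.choose (j+1) : ℂ) * (k.choose (j+1) : ℂ) * ((j+1).factorial : ℂ) *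
            ∏ i ∈ range (m - j), (z + (j+1:ℕ) + i) = g (j + 1) := by
        intro j hj
        simp only [hg, show m + 1 - (j + 1) = m - j by omega]
      have h0 : ((m+1).choose 0 : ℂ) * (k.choose 0 : ℂ) * ((Nat.factorial 0 : ℕ) : ℂ) *
            ∏ i ∈ range (m + 1 - 0), (z + (0:ℕ) + i) = g 0 := by simp [hg]
      rw [Finset.sum_congr rfl h1, h0, ← Finset.sum_range_succ' g (m+1),
        Finset.sum_range_succ]
      have htop : g (m + 1) = 0 := by simp [hg, Nat.choose_succ_self]
      rw [htop, add_zero]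
      have h2 : ∀ n ∈ range (m + 1),
          g n = ((m.choose n : ℂ) * (k.choose n : ℂ) * (n.factorial : ℂ) *
            ∏ i ∈ range (m - n), (z + (n:ℕ) + i)) * (z + m) := by
        intro n hn
        have hnm : n ≤ m := Nat.lt_succ_iff.mp (mem_range.mp hn)
        have hc : (n : ℂ) + ((m - n : ℕ) : ℂ) = (m : ℂ) := by
          rw [Nat.cast_sub hnm]; ring
        rw [hg]
        simp only [show m + 1 - n = (m - n) + 1 by omega, prod_range_succ]
        rw [show z + (n:ℂ) + ((m - n : ℕ) : ℂ) = z + (m:ℂ) by linear_combination hc]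
        ring
      rw [Finset.sum_congr rfl h2, ← Finset.sum_mul, ← ih k z]
    have hB : (∑ j ∈ range (m + 1), (m.choose j : ℂ) * (k.choose (j+1) : ℂ) *
            ((j+1).factorial : ℂ) * ∏ i ∈ range (m - j), (z + (j+1:ℕ) + i))
        = (k : ℂ) * ∏ i ∈ range m, (z + k + i) := by
      cases k with
      | zero => simp
      | succ k' =>
        have h3 : ∀ j ∈ range (m + 1),
            (m.choose j : ℂ) * ((k'+1).choose (j+1) : ℂ) * ((j+1).factorial : ℂ) *
              ∏ i ∈ range (m - j), (z + (j+1:ℕ) + i)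
            = ((k'+1 : ℕ) : ℂ) * ((m.choose j : ℂ) * (k'.choose j : ℂ) * (j.factorial : ℂ) *
              ∏ i ∈ range (m - j), ((z+1) + (j:ℕ) + i)) := by
          intro j hj
          have h4 : (k'+1).choose (j+1) * (j+1).factorial
              = (k'+1) * k'.choose j * j.factorial := by
            rw [Nat.factorial_succ, ← mul_assoc, ← Nat.add_one_mul_choose_eq k' j]
            try ring
          have hc : ((k'+1).choose (j+1) : ℂ) * ((j+1).factorial : ℂ)
              = ((k'+1 : ℕ) : ℂ) * (k'.choose j : ℂ) * (j.factorial : ℂ) := by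
            exact_mod_cast congrArg (Nat.cast : ℕ → ℂ) h4
          have hp : (∏ i ∈ range (m - j), (z + (j+1:ℕ) + i))
              = ∏ i ∈ range (m - j), ((z+1) + (j:ℕ) + i) := by
            apply Finset.prod_congr rfl
            intro i _
            push_cast
            try ring
            try rfl
          rw [hp]
          calc (m.choose j : ℂ) * ((k'+1).choose (j+1) : ℂ) * ((j+1).factorial : ℂ) *
              ∏ i ∈ range (m - j), ((z+1) + (j:ℕ) + i)
              = (m.choose j : ℂ) * (((k'+1).choose (j+1) : ℂ) * ((j+1).factorial : ℂ)) *
              ∏ i ∈ range (m - j), ((z+1) + (j:ℕ) + i) := by ring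
            _ = _ := by rw [hc]; ring
        rw [Finset.sum_congr rfl h3, ← Finset.mul_sum, ← ih k' (z+1)]
        have hp2 : (∏ i ∈ range m, ((z+1) + (k':ℕ) + i)) = ∏ i ∈ range m, (z + ((k'+1:ℕ):ℂ) + i) := by
          apply Finset.prod_congr rfl
          intro i _
          push_cast
          try ring
          try rfl
        rw [hp2]
    linear_combination -hA - hB

lemma gammaRec (z : ℂ) (hz : ∀ n : ℕ, z ≠ -(n : ℂ)) (n : ℕ) :
    Complex.Gamma (z + n) = Complex.Gamma z * ∏ i ∈ range n, (z + i) := by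
  induction n with
  | zero => simp
  | succ n ih =>
    have h : z + n ≠ 0 := by
      intro h; exact hz n (by linear_combination h)
    rw [show z + ((n + 1 : ℕ) : ℂ) = (z + n) + 1 by push_cast; ring,
      Complex.Gamma_add_one _ h, ih, prod_range_succ]
    ring

theorem stmt_17 (m k : ℕ) (z : ℂ) (hz : ∀ n : ℕ, z ≠ -(n : ℂ)) :
    Complex.Gamma (z + m + k) / (Complex.Gamma (z + m) * Complex.Gamma (z + k)) =
      ∑ n ∈ Finset.range (min m k + 1),
        ((m.choose n : ℂ) * (k.choose n : ℂ) * (n.factorial : ℂ)) / Complex.Gamma (z + n) := by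
  have hshift : ∀ a : ℕ, ∀ n : ℕ, (z + a) ≠ -(n : ℂ) := by
    intro a n h
    exact hz (n + a) (by push_cast; linear_combination h)
  have hne : ∀ a : ℕ, Complex.Gamma (z + a) ≠ 0 := by
    intro a
    exact Complex.Gamma_ne_zero (hshift a)
  -- extend the sum to range (m+1)
  have hsub : Finset.range (min m k + 1) ⊆ Finset.range (m + 1) := by
    apply Finset.range_subset_range.mpr; omega
  have hext : ∑ n ∈ Finset.range (min m k + 1),
        ((m.choose n : ℂ) * (k.choose n : ℂ) * (n.factorial : ℂ)) / Complex.Gamma (z + n)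
      = ∑ n ∈ Finset.range (m + 1),
        ((m.choose n : ℂ) * (k.choose n : ℂ) * (n.factorial : ℂ)) / Complex.Gamma (z + n) := by
    apply Finset.sum_subset hsub
    intro n hn hn'
    have h1 : min m k < n := by
      simp only [Finset.mem_range] at hn hn'; omega
    have h2 : n ≤ m := by simp only [Finset.mem_range] at hn; omega
    have h3 : k < n := by omega
    rw [Nat.choose_eq_zero_of_lt h3]
    simp
  rw [hext]
  -- rewrite each term over common denominator Γ(z+m)
  have hterm : ∀ n ∈ Finset.range (m + 1),
      ((m.choose n : ℂ) * (k.choose n : ℂ) * (n.factorial : ℂ)) / Complex.Gamma (z + n)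
      = ((m.choose n : ℂ) * (k.choose n : ℂ) * (n.factorial : ℂ) *
          ∏ i ∈ range (m - n), (z + n + i)) / Complex.Gamma (z + m) := by
    intro n hn
    have hnm : n ≤ m := Nat.lt_succ_iff.mp (Finset.mem_range.mp hn)
    have hG : Complex.Gamma (z + m) = Complex.Gamma (z + n) * ∏ i ∈ range (m - n), (z + n + i) := by
      have := gammaRec (z + n) (hshift n) (m - n)
      rw [show z + (n : ℂ) + ((m - n : ℕ) : ℂ) = z + (m : ℂ) by
        rw [Nat.cast_sub hnm]; ring] at this
      exact this
    have hP : (∏ i ∈ range (m - n), (z + n + i)) ≠ 0 := by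
      apply Finset.prod_ne_zero_iff.mpr
      intro i _ h
      exact hz (n + i) (by push_cast; linear_combination h)
    rw [hG]
    exact (mul_div_mul_right _ (Complex.Gamma (z + (n:ℂ))) hP).symm
  rw [Finset.sum_congr rfl hterm, ← Finset.sum_div]
  -- LHS
  have hL : Complex.Gamma (z + m + k) = Complex.Gamma (z + k) * ∏ i ∈ range m, (z + k + i) := by
    have := gammaRec (z + k) (hshift k) m
    rw [show z + (k : ℂ) + (m : ℂ) = z + (m : ℂ) + (k : ℂ) by ring] at this
    exact this
  rw [hL, ← lemA m k z,
    mul_comm (Complex.Gamma (z + (k:ℂ))) (∏ i ∈ range m, (z + k + i)),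
    mul_comm (Complex.Gamma (z + (m:ℂ))) (Complex.Gamma (z + (k:ℂ))),
    mul_comm (Complex.Gamma (z + (k:ℂ))) (Complex.Gamma (z + (m:ℂ))),
    mul_div_mul_right _ _ (hne k)]
end
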